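/- If for every N the point θ̂_N maximizes a function F_N over a set Θ, F_N = G_N + H_N with G_N maximized at α_N and H_N maximized at β_N, both G_N and H_N concave on convex Θ ⊆ ℝᵈ with d = 1, then θ̂_N lies in the segment [min(α_N, β_N), max(α_N, β_N)]; consequently, if α_N → θ* and β_N → θ*, then θ̂_N → θ*. -/

import Mathlib

/-!
If `θ̂` lay outside `[[α, β]]`, one of `α`, `β` would lie between `θ̂` and the other. Concavity of
`G` and `H` along these segments then gives a point `m ∈ {α, β}` with `G θ̂ < G m` (as `θ̂ ≠ α`,
the unique maximiser of `G`) and `H θ̂ ≤ H m`, contradicting the maximality of `θ̂` for `G + H`.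
Convergence follows by squeezing `θ̂` between `min α β` and `max α β`.
-/

open Set Filter Topology
open scoped Interval Convex

theorem Set.mem_uIcc_or_mem_uIcc_of_notMem_uIcc {α : Type*} [LinearOrder α] {a b c : α}
    (hc : c ∉ [[a, b]]) : a ∈ [[c, b]] ∨ b ∈ [[c, a]] := by
  simp only [mem_uIcc] at hc ⊢
  grind

theorem ConcaveOn.lt_of_mem_segment_of_ne {𝕜 E β : Type*} [Field 𝕜] [LinearOrder 𝕜]
    [IsStrictOrderedRing 𝕜] [AddCommGroup E] [Module 𝕜 E] [AddCommMonoid β] [LinearOrder β]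
    [IsOrderedCancelAddMonoid β] [Module 𝕜 β] [PosSMulStrictMono 𝕜 β] {s : Set E} {f : E → β}
    {x y z : E} (hf : ConcaveOn 𝕜 s f) (hx : x ∈ s) (hy : y ∈ s) (hz : z ∈ [x -[𝕜] y])
    (hzx : z ≠ x) (hxy : f x < f y) : f x < f z := by
  rcases eq_or_ne z y with rfl | hzy
  · exact hxy
  refine lt_of_not_ge fun hzx' ↦ (hf.right_le_of_le_left hx hy ?_ hzx').not_gt (hzx'.trans_lt hxy)
  exact mem_openSegment_of_ne_left_right hzx.symm hzy.symm hz

theorem ConcaveOn.mem_uIcc_of_forall_add_le {s : Set ℝ} {g h : ℝ → ℝ} {a b c : ℝ}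
    (hg : ConcaveOn ℝ s g) (hh : ConcaveOn ℝ s h) (ha : a ∈ s) (hb : b ∈ s) (hc : c ∈ s)
    (hga : ∀ x ∈ s, g x ≤ g a) (hga_uniq : ∀ x ∈ s, g x = g a → x = a)
    (hhb : ∀ x ∈ s, h x ≤ h b) (hgh : ∀ x ∈ s, g x + h x ≤ g c + h c) :
    c ∈ [[a, b]] := by
  by_contra hcab
  have hca : c ≠ a := fun hca ↦ hcab (hca ▸ left_mem_uIcc)
  have hgc : g c < g a := (hga c hc).lt_of_ne fun hgc ↦ hca (hga_uniq c hc hgc)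
  rcases mem_uIcc_or_mem_uIcc_of_notMem_uIcc hcab with hacb | hbca
  · have hhc : h c ≤ h a := by
      simpa [min_eq_left (hhb c hc)] using
        hh.ge_on_segment hc hb (segment_eq_uIcc c b ▸ hacb)
    linarith [hgh a ha]
  · have hbc : b ≠ c := fun hbc ↦ hcab (hbc ▸ right_mem_uIcc)
    have hgc' : g c < g b := hg.lt_of_mem_segment_of_ne hc ha (segment_eq_uIcc c a ▸ hbca) hbc hgc
    linarith [hgh b hb, hhb c hc]

theorem stmt_18_general (Θ : Set ℝ)
    (G H : ℕ → ℝ → ℝ) (α β θhat : ℕ → ℝ) (θstar : ℝ)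
    (hG : ∀ N, ConcaveOn ℝ Θ (G N)) (hH : ∀ N, ConcaveOn ℝ Θ (H N))
    (hα : ∀ N, α N ∈ Θ) (hβ : ∀ N, β N ∈ Θ) (hθhat : ∀ N, θhat N ∈ Θ)
    (hαmax : ∀ N, ∀ x ∈ Θ, G N x ≤ G N (α N))
    (hαuniq : ∀ N, ∀ x ∈ Θ, G N x = G N (α N) → x = α N)
    (hβmax : ∀ N, ∀ x ∈ Θ, H N x ≤ H N (β N))
    (hmax : ∀ N, ∀ x ∈ Θ, G N x + H N x ≤ G N (θhat N) + H N (θhat N)) :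
    (∀ N, θhat N ∈ Set.Icc (min (α N) (β N)) (max (α N) (β N))) ∧
      (Filter.Tendsto α Filter.atTop (nhds θstar) →
        Filter.Tendsto β Filter.atTop (nhds θstar) →
        Filter.Tendsto θhat Filter.atTop (nhds θstar)) := by
  have hmem : ∀ N, θhat N ∈ [[α N, β N]] := fun N ↦
    (hG N).mem_uIcc_of_forall_add_le (hH N) (hα N) (hβ N) (hθhat N) (hαmax N) (hαuniq N)
      (hβmax N) (hmax N)
  refine ⟨hmem, fun hαt hβt ↦ ?_⟩
  have hlower : Tendsto (fun N ↦ min (α N) (β N)) atTop (𝓝 θstar) := by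
    simpa using hαt.min hβt
  have hupper : Tendsto (fun N ↦ max (α N) (β N)) atTop (𝓝 θstar) := by
    simpa using hαt.max hβt
  exact tendsto_of_tendsto_of_tendsto_of_le_of_le hlower hupper (fun N ↦ (hmem N).1)
    fun N ↦ (hmem N).2

theorem stmt_18 (Θ : Set ℝ) (hΘ : Convex ℝ Θ)
    (G H : ℕ → ℝ → ℝ) (α β θhat : ℕ → ℝ) (θstar : ℝ)
    (hG : ∀ N, ConcaveOn ℝ Θ (G N)) (hH : ∀ N, ConcaveOn ℝ Θ (H N))
    (hα : ∀ N, α N ∈ Θ) (hβ : ∀ N, β N ∈ Θ) (hθhat : ∀ N, θhat N ∈ Θ)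
    (hαmax : ∀ N, ∀ x ∈ Θ, G N x ≤ G N (α N))
    (hαuniq : ∀ N, ∀ x ∈ Θ, G N x = G N (α N) → x = α N)
    (hβmax : ∀ N, ∀ x ∈ Θ, H N x ≤ H N (β N))
    (hβuniq : ∀ N, ∀ x ∈ Θ, H N x = H N (β N) → x = β N)
    (hmax : ∀ N, ∀ x ∈ Θ, G N x + H N x ≤ G N (θhat N) + H N (θhat N)) :
    (∀ N, θhat N ∈ Set.Icc (min (α N) (β N)) (max (α N) (β N))) ∧
      (Filter.Tendsto α Filter.atTop (nhds θstar) →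
        Filter.Tendsto β Filter.atTop (nhds θstar) →
        Filter.Tendsto θhat Filter.atTop (nhds θstar)) :=
  stmt_18_general Θ G H α β θhat θstar hG hH hα hβ hθhat hαmax hαuniq hβmax hmax
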